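/- arXiv:1611.04213 — 8 statements merged into one kernel-verified Lean document; each statement's English description precedes it below -/
import Mathlib

section
/- If P is a (K,F,Z,S) PDA with F > Z, and row i of P contains m integer entries, then deleting row i and the m columns that have an integer entry in row i yields a (m, F−1, Z, S') PDA for some S' ≤ S − m. Consequently S(K,F,Z) ≥ ⌈(F−Z)K/F⌉ + S(⌈(F−Z)K/F⌉, F−1, Z), where S(K,F,Z) denotes the minimum S over all (K,F,Z,S) PDAs. -/
/-- A `(K, F, Z, S)` placement delivery array: an `F × K` array over `[0,S) ∪ {*}`
(star encoded as `none`) such that each column contains exactly `Z` stars, every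
integer in `[0,S)` appears, and any two equal integer entries lie in distinct rows
and distinct columns with stars at the two crossing positions. -/
def IsPDA (K F Z S : ℕ) (P : Fin F → Fin K → Option ℕ) : Prop :=
  (∀ j, (Finset.univ.filter fun i => P i j = none).card = Z) ∧
  (∀ i j s, P i j = some s → s < S) ∧
  (∀ s, s < S → ∃ i j, P i j = some s) ∧
  (∀ i₁ j₁ i₂ j₂ s, P i₁ j₁ = some s → P i₂ j₂ = some s → (i₁ ≠ i₂ ∨ j₁ ≠ j₂) →
    i₁ ≠ i₂ ∧ j₁ ≠ j₂ ∧ P i₁ j₂ = none ∧ P i₂ j₁ = none)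

/-- `minS K F Z` is the minimum `S` for which a `(K, F, Z, S)` PDA exists. -/
noncomputable def minS (K F Z : ℕ) : ℕ :=
  sInf {S | ∃ P : Fin F → Fin K → Option ℕ, IsPDA K F Z S P}

/-!
Fix a row `i` with `m` integer entries and let `P'` be the subarray on the other rows and the `m`
columns in which row `i` holds an integer. All stars of these columns lie outside row `i`, so every
column of `P'` still has `Z` stars. The `m` integers of row `i` are pairwise distinct and none of
them occurs in `P'`: an occurrence at `(i', k)` would force a star at `(i, k)`. Relabelling the
integers of `P'` onto `[0, S')` gives an `(m, F - 1, Z, S')` PDA with `S' + m ≤ S`.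

For the bound, an optimal `(K, F, Z)` PDA has `(F - Z) K` integer entries, so some row holds at
least `⌈(F - Z) K / F⌉` of them; delete it as above and keep only `⌈(F - Z) K / F⌉` columns, using
that `minS` is monotone in the number of columns.
-/

open Finset Function

section

variable {K F Z S : ℕ}

def entries (P : Fin F → Fin K → Option ℕ) : Finset ℕ :=
  univ.biUnion fun ij : Fin F × Fin K => (P ij.1 ij.2).toFinset

@[simp] lemma mem_entries {P : Fin F → Fin K → Option ℕ} {s : ℕ} :
    s ∈ entries P ↔ ∃ i j, P i j = some s := by
  simp [entries]

def rowEntries (P : Fin F → Fin K → Option ℕ) (i : Fin F) : Finset ℕ :=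
  univ.biUnion fun j => (P i j).toFinset

@[simp] lemma mem_rowEntries {P : Fin F → Fin K → Option ℕ} {i : Fin F} {s : ℕ} :
    s ∈ rowEntries P i ↔ ∃ j, P i j = some s := by
  simp [rowEntries]

def StarsPerColumn (Z : ℕ) (P : Fin F → Fin K → Option ℕ) : Prop :=
  ∀ j, #{i | P i j = none} = Z

def StarCrossing (P : Fin F → Fin K → Option ℕ) : Prop :=
  ∀ i₁ j₁ i₂ j₂ s, P i₁ j₁ = some s → P i₂ j₂ = some s → (i₁ ≠ i₂ ∨ j₁ ≠ j₂) →
    i₁ ≠ i₂ ∧ j₁ ≠ j₂ ∧ P i₁ j₂ = none ∧ P i₂ j₁ = none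

lemma isPDA_iff {P : Fin F → Fin K → Option ℕ} :
    IsPDA K F Z S P ↔ StarsPerColumn Z P ∧ entries P = range S ∧ StarCrossing P := by
  simp only [IsPDA, StarsPerColumn, StarCrossing, Finset.ext_iff, mem_entries, mem_range]
  constructor
  · rintro ⟨hcol, hlt, hocc, hcross⟩
    exact ⟨hcol, fun s => ⟨fun ⟨i, j, h⟩ => hlt i j s h, hocc s⟩, hcross⟩
  · rintro ⟨hcol, hent, hcross⟩
    exact ⟨hcol, fun i j s h => (hent s).1 ⟨i, j, h⟩, fun s => (hent s).2, hcross⟩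

section Relabel

variable {P : Fin F → Fin K → Option ℕ}

lemma StarsPerColumn.map (h : StarsPerColumn Z P) (f : ℕ → ℕ) :
    StarsPerColumn Z fun i j => (P i j).map f := by
  simpa only [StarsPerColumn, Option.map_eq_none_iff] using h

lemma StarCrossing.map (h : StarCrossing P) {f : ℕ → ℕ} (hf : Set.InjOn f (entries P)) :
    StarCrossing fun i j => (P i j).map f := by
  rintro i₁ j₁ i₂ j₂ s h₁ h₂ hne
  obtain ⟨t₁, ht₁, rfl⟩ := Option.map_eq_some_iff.1 h₁
  obtain ⟨t₂, ht₂, hft⟩ := Option.map_eq_some_iff.1 h₂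
  obtain rfl : t₂ = t₁ := hf (mem_entries.2 ⟨_, _, ht₂⟩) (mem_entries.2 ⟨_, _, ht₁⟩) hft
  obtain ⟨hi, hj, h₁₂, h₂₁⟩ := h i₁ j₁ i₂ j₂ t₂ ht₁ ht₂ hne
  simp [hi, hj, h₁₂, h₂₁]

lemma entries_map (P : Fin F → Fin K → Option ℕ) (f : ℕ → ℕ) :
    entries (fun i j => (P i j).map f) = (entries P).image f := by
  ext s
  simp only [mem_entries, mem_image, Option.map_eq_some_iff]
  grind

theorem exists_isPDA_card_entries (hcol : StarsPerColumn Z P) (hcross : StarCrossing P) :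
    ∃ Q : Fin F → Fin K → Option ℕ, IsPDA K F Z #(entries P) Q := by
  set T := entries P
  let f : ℕ → ℕ := fun s => if h : s ∈ T then T.equivFin ⟨s, h⟩ else 0
  have hf : Set.InjOn f T := fun a ha b hb hab => by
    rw [mem_coe] at ha hb
    simpa [f, ha, hb, Fin.val_inj] using hab
  have himage : T.image f = range #T := by
    refine eq_of_subset_of_card_le (fun s hs => ?_) (by rw [card_image_of_injOn hf, card_range])
    obtain ⟨t, ht, rfl⟩ := mem_image.1 hs
    simp [f, ht]
  exact ⟨_, isPDA_iff.2 ⟨hcol.map f, (entries_map P f).trans himage, hcross.map hf⟩⟩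

end Relabel

section Submatrix

variable {K' F' : ℕ} {P : Fin F → Fin K → Option ℕ} {r : Fin F' → Fin F} {c : Fin K' → Fin K}

lemma StarCrossing.submatrix (h : StarCrossing P) (hr : Injective r) (hc : Injective c) :
    StarCrossing fun i j => P (r i) (c j) := by
  rintro i₁ j₁ i₂ j₂ s h₁ h₂ hne
  obtain ⟨hi, hj, h₁₂, h₂₁⟩ := h _ _ _ _ s h₁ h₂ (hne.imp hr.ne hc.ne)
  exact ⟨fun e => hi (congrArg r e), fun e => hj (congrArg c e), h₁₂, h₂₁⟩

lemma StarsPerColumn.submatrix (h : StarsPerColumn Z P) (hr : Injective r)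
    (hstar : ∀ i j, P i (c j) = none → i ∈ Set.range r) :
    StarsPerColumn Z fun i j => P (r i) (c j) := by
  intro j
  rw [← h (c j), ← card_map ⟨r, hr⟩]
  congr 1
  ext i
  simp only [mem_map, mem_filter, mem_univ, true_and, Embedding.coeFn_mk]
  constructor
  · rintro ⟨i', hi', rfl⟩
    exact hi'
  · intro hi
    obtain ⟨i', rfl⟩ := hstar i j hi
    exact ⟨i', hi, rfl⟩

lemma entries_submatrix_subset : entries (fun i j => P (r i) (c j)) ⊆ entries P := by
  intro s
  simp only [mem_entries]
  rintro ⟨i, j, h⟩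
  exact ⟨_, _, h⟩

end Submatrix

lemma StarCrossing.card_rowEntries {P : Fin F → Fin K → Option ℕ} (h : StarCrossing P)
    (i : Fin F) : #(rowEntries P i) = #{j | P i j ≠ none} := by
  rw [rowEntries, card_biUnion, card_filter]
  · refine sum_congr rfl fun j _ => ?_
    cases hj : P i j <;> simp
  · intro j₁ _ j₂ _ hne
    refine disjoint_left.2 fun s h₁ h₂ => ?_
    rw [Option.mem_toFinset] at h₁ h₂
    exact (h i j₁ i j₂ s h₁ h₂ (Or.inr hne)).1 rfl

theorem IsPDA.exists_deleteRow {P : Fin (F + 1) → Fin K → Option ℕ}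
    (hP : IsPDA K (F + 1) Z S P) (i : Fin (F + 1)) :
    ∃ S', S' + #{j | P i j ≠ none} ≤ S ∧
      ∃ Q : Fin F → Fin #{j | P i j ≠ none} → Option ℕ, IsPDA _ F Z S' Q := by
  obtain ⟨hcol, hent, hcross⟩ := isPDA_iff.1 hP
  set cols : Finset (Fin K) := {j | P i j ≠ none}
  let c := cols.orderEmbOfFin rfl
  have hc : ∀ j, P i (c j) ≠ none := fun j => (mem_filter.1 (cols.orderEmbOfFin_mem rfl j)).2
  have hstar : ∀ i' j, P i' (c j) = none → i' ∈ Set.range i.succAbove := by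
    intro i' j h
    simp only [Fin.range_succAbove, Set.mem_compl_singleton_iff]
    rintro rfl
    exact hc j h
  obtain ⟨Q, hQ⟩ := exists_isPDA_card_entries (hcol.submatrix Fin.succAbove_right_injective hstar)
    (hcross.submatrix Fin.succAbove_right_injective c.injective)
  refine ⟨_, ?_, Q, hQ⟩
  have hdisj : Disjoint (entries fun i' j => P (i.succAbove i') (c j)) (rowEntries P i) := by
    refine disjoint_left.2 fun s h₁ h₂ => ?_
    obtain ⟨i', j, h₁⟩ := mem_entries.1 h₁
    obtain ⟨j', h₂⟩ := mem_rowEntries.1 h₂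
    exact hc j (hcross _ _ _ _ s h₁ h₂ (Or.inl (Fin.succAbove_ne i i'))).2.2.2
  have hsub : (entries fun i' j => P (i.succAbove i') (c j)) ∪ rowEntries P i ⊆ entries P :=
    union_subset entries_submatrix_subset fun s hs =>
      mem_entries.2 (let ⟨j, h⟩ := mem_rowEntries.1 hs; ⟨i, j, h⟩)
  calc _ = #((entries fun i' j => P (i.succAbove i') (c j)) ∪ rowEntries P i) := by
        rw [card_union_of_disjoint hdisj, hcross.card_rowEntries]
    _ ≤ #(entries P) := card_le_card hsub
    _ = S := by rw [hent, card_range]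

lemma minS_le {P : Fin F → Fin K → Option ℕ} (hP : IsPDA K F Z S P) : minS K F Z ≤ S :=
  Nat.sInf_le ⟨P, hP⟩

lemma exists_isPDA (K : ℕ) (hZ : Z ≤ F) :
    ∃ S, ∃ P : Fin F → Fin K → Option ℕ, IsPDA K F Z S P := by
  let P : Fin F → Fin K → Option ℕ := fun i j => if (i : ℕ) < Z then none else some (Nat.pair i j)
  refine ⟨_, exists_isPDA_card_entries (P := P) (fun j => ?_) ?_⟩
  · simp only [P, ite_eq_left_iff, reduceCtorEq, imp_false, not_not, Fin.card_filter_val_lt]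
    omega
  · intro i₁ j₁ i₂ j₂ s h₁ h₂ hne
    obtain ⟨-, h₁⟩ := Option.ite_none_left_eq_some.1 h₁
    obtain ⟨-, h₂⟩ := Option.ite_none_left_eq_some.1 h₂
    obtain ⟨hi, hj⟩ := Nat.pair_eq_pair.1 (Option.some.inj (h₁.trans h₂.symm))
    exact (hne.elim (· (Fin.ext hi)) (· (Fin.ext hj))).elim

lemma exists_isPDA_minS (K : ℕ) (hZ : Z ≤ F) :
    ∃ P : Fin F → Fin K → Option ℕ, IsPDA K F Z (minS K F Z) P :=
  Nat.sInf_mem (exists_isPDA K hZ)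

lemma minS_mono {K' : ℕ} (hZ : Z ≤ F) (hK : K' ≤ K) : minS K' F Z ≤ minS K F Z := by
  obtain ⟨P, hP⟩ := exists_isPDA_minS K hZ
  obtain ⟨hcol, hent, hcross⟩ := isPDA_iff.1 hP
  obtain ⟨Q, hQ⟩ := exists_isPDA_card_entries
    (hcol.submatrix (r := id) (c := Fin.castLE hK) injective_id (by simp))
    (hcross.submatrix injective_id (Fin.castLE_injective hK))
  calc minS K' F Z ≤ _ := minS_le hQ
    _ ≤ #(entries P) := card_le_card entries_submatrix_subset
    _ = minS K F Z := by rw [hent, card_range]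

lemma StarsPerColumn.sum_card_row {P : Fin F → Fin K → Option ℕ} (h : StarsPerColumn Z P) :
    ∑ i, #{j | P i j ≠ none} = (F - Z) * K := by
  have hcol : ∀ j, #{i | P i j ≠ none} = F - Z := fun j => by
    have := card_filter_add_card_filter_not (s := univ) (fun i => P i j = none)
    rw [card_univ, Fintype.card_fin, h j] at this
    simp only [ne_eq]
    omega
  simp_rw [card_filter]
  rw [sum_comm]
  simp_rw [← card_filter, hcol, sum_const, card_univ, Fintype.card_fin, smul_eq_mul, mul_comm]

lemma StarsPerColumn.exists_ceilDiv_le_card_row {P : Fin F → Fin K → Option ℕ}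
    (h : StarsPerColumn Z P) (hF : 0 < F) : ∃ i, (F - Z) * K ⌈/⌉ F ≤ #{j | P i j ≠ none} := by
  have : ∑ _i : Fin F, (F - Z) * K ≤ ∑ i, F * #{j | P i j ≠ none} := by
    rw [sum_const, ← mul_sum, h.sum_card_row, card_univ, Fintype.card_fin, smul_eq_mul]
  obtain ⟨i, -, hi⟩ := exists_le_of_sum_le ⟨⟨0, hF⟩, mem_univ _⟩ this
  exact ⟨i, (ceilDiv_le_iff_le_mul hF).2 hi⟩

end

/-- deleting a row with `m` integer entries together with the `m`
columns having an integer in that row yields an `(m, F−1, Z, S')` PDA with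
`S' ≤ S − m`; consequently
`minS K F Z ≥ ⌈(F−Z)K/F⌉ + minS ⌈(F−Z)K/F⌉ (F−1) Z`. -/
theorem stmt2 :
    (∀ (K F Z S : ℕ), Z < F → ∀ P : Fin F → Fin K → Option ℕ, IsPDA K F Z S P →
      ∀ i : Fin F, ∀ m : ℕ, m = (Finset.univ.filter fun j => P i j ≠ none).card →
        ∃ S' ≤ S - m, ∃ Q : Fin (F - 1) → Fin m → Option ℕ, IsPDA m (F - 1) Z S' Q) ∧
    (∀ (K F Z : ℕ), 0 < K → Z < F →
      (F - Z) * K ⌈/⌉ F + minS ((F - Z) * K ⌈/⌉ F) (F - 1) Z ≤ minS K F Z) := by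
  constructor
  · rintro K (_ | F) Z S hZ P hP i m rfl
    · omega
    obtain ⟨S', hS', Q, hQ⟩ := hP.exists_deleteRow i
    exact ⟨S', by omega, Q, hQ⟩
  · rintro K (_ | F) Z - hZ
    · omega
    obtain ⟨P, hP⟩ := exists_isPDA_minS K hZ.le
    obtain ⟨i, hi⟩ := (isPDA_iff.1 hP).1.exists_ceilDiv_le_card_row F.succ_pos
    obtain ⟨S', hS', Q, hQ⟩ := hP.exists_deleteRow i
    have hmono := minS_mono (Nat.le_of_lt_succ hZ) hi
    have hQS := minS_le hQ
    simp only [Nat.add_sub_cancel]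
    omega
end

section
/- For any positive integers K, F, Z with F ≥ Z and any (K,F,Z,S) PDA, S ≥ ⌈(F−Z)K/F⌉ + (F−Z) − 1. -/
/-- for positive K, F, Z with F ≥ Z, any (K,F,Z,S) PDA satisfies
S ≥ ⌈(F−Z)K/F⌉ + (F−Z) − 1. -/
theorem stmt3 (K F Z S : ℕ) (hK : 0 < K) (hF : 0 < F) (hZ : 0 < Z) (hZF : Z ≤ F)
    (P : Fin F → Fin K → Option ℕ) (hP : IsPDA K F Z S P) :
    (F - Z) * K ⌈/⌉ F + (F - Z) - 1 ≤ S := by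
  obtain ⟨hcol, hlt, _hsurj, hmain⟩ := hP
  rcases eq_or_lt_of_le hZF with hEq | hZlt
  · subst hEq
    simp
  set r := F - Z with hr
  have hrpos : 0 < r := by omega
  -- each column has exactly r integer entries
  have hcolint : ∀ j, (Finset.univ.filter fun i => P i j ≠ none).card = r := by
    intro j
    have := Finset.card_filter_add_card_filter_not
      (s := (Finset.univ : Finset (Fin F))) (p := fun i => P i j = none)
    have h2 := hcol j
    simp only [Finset.card_univ, Fintype.card_fin] at this
    simp only [ne_eq]
    omega
  -- total integer entries counted by rows
  have htot : ∑ i : Fin F, (Finset.univ.filter fun j => P i j ≠ none).card = r * K := by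
    classical
    have : ∑ i : Fin F, (Finset.univ.filter fun j => P i j ≠ none).card
        = ∑ j : Fin K, (Finset.univ.filter fun i => P i j ≠ none).card := by
      simp_rw [Finset.card_filter]
      rw [Finset.sum_comm]
    rw [this]
    simp_rw [hcolint]
    simp [mul_comm]
  -- pigeonhole: a row with many integer entries
  obtain ⟨i, -, hi⟩ := Finset.exists_max_image (Finset.univ : Finset (Fin F))
    (fun i => (Finset.univ.filter fun j => P i j ≠ none).card) ⟨⟨0, hF⟩, Finset.mem_univ _⟩
  set m := (Finset.univ.filter fun j => P i j ≠ none).card with hm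
  have hceil : r * K ⌈/⌉ F ≤ m := by
    rw [ceilDiv_le_iff_le_mul hF]
    calc r * K = ∑ i : Fin F, (Finset.univ.filter fun j => P i j ≠ none).card := htot.symm
      _ ≤ ∑ _i : Fin F, m := Finset.sum_le_sum fun x _ => hi x (Finset.mem_univ x)
      _ = F * m := by simp [mul_comm]
  have hm1 : 1 ≤ m := by
    by_contra h
    have hall : ∀ x : Fin F, (Finset.univ.filter fun j => P x j ≠ none).card = 0 := by
      intro x
      have := hi x (Finset.mem_univ x)
      omega
    have h0 : r * K = 0 := by rw [← htot]; simp [hall]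
    have := Nat.mul_pos hrpos hK
    omega
  -- pick a column j₀ with an integer entry in row i
  have hne : (Finset.univ.filter fun j => P i j ≠ none).Nonempty :=
    Finset.card_pos.mp (by omega)
  obtain ⟨j₀, hj₀⟩ := hne
  have hj₀int : P i j₀ ≠ none := (Finset.mem_filter.mp hj₀).2
  -- the symbols in row i
  set A : Finset (Option ℕ) := (Finset.univ.filter fun j => P i j ≠ none).image (fun j => P i j)
    with hA
  have hAcard : A.card = m := by
    rw [hA, Finset.card_image_of_injOn, hm]
    intro j₁ h₁ j₂ h₂ hEq
    by_contra hne
    obtain ⟨s, hs⟩ := Option.ne_none_iff_exists'.mp (Finset.mem_filter.mp h₁).2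
    have hEq' : P i j₁ = P i j₂ := hEq
    have := hmain i j₁ i j₂ s hs (hEq' ▸ hs) (Or.inr hne)
    exact this.1 rfl
  -- the symbols in column j₀ outside row i
  set B : Finset (Option ℕ) :=
    ((Finset.univ.filter fun x => P x j₀ ≠ none).erase i).image (fun x => P x j₀) with hB
  have hBcard : B.card = r - 1 := by
    rw [hB, Finset.card_image_of_injOn, Finset.card_erase_of_mem, hcolint]
    · exact Finset.mem_filter.mpr ⟨Finset.mem_univ _, hj₀int⟩
    · intro x₁ h₁ x₂ h₂ hEq
      by_contra hne
      obtain ⟨s, hs⟩ := Option.ne_none_iff_exists'.mp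
        (Finset.mem_filter.mp (Finset.mem_of_mem_erase h₁)).2
      have hEq' : P x₁ j₀ = P x₂ j₀ := hEq
      have := hmain x₁ j₀ x₂ j₀ s hs (hEq' ▸ hs) (Or.inl hne)
      exact this.2.1 rfl
  -- A and B are disjoint
  have hdisj : Disjoint A B := by
    rw [Finset.disjoint_left]
    intro a haA haB
    rw [hA, Finset.mem_image] at haA
    rw [hB, Finset.mem_image] at haB
    obtain ⟨j₁, hj₁, hj₁a⟩ := haA
    obtain ⟨x, hx, hxa⟩ := haB
    have hxi : x ≠ i := Finset.ne_of_mem_erase hx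
    obtain ⟨s, hs⟩ := Option.ne_none_iff_exists'.mp (Finset.mem_filter.mp hj₁).2
    have hs' : P x j₀ = some s := by rw [hxa, ← hj₁a, hs]
    have := hmain i j₁ x j₀ s hs hs' (Or.inl (Ne.symm hxi))
    rcases eq_or_ne j₁ j₀ with h | h
    · exact this.2.1 h
    · exact hj₀int this.2.2.1
  -- all elements of A ∪ B are some s with s < S
  have hsub : A ∪ B ⊆ (Finset.range S).image some := by
    intro a ha
    rw [Finset.mem_union] at ha
    have : ∃ x y, P x y = a ∧ P x y ≠ none := by
      rcases ha with h | h
      · rw [hA, Finset.mem_image] at h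
        obtain ⟨j₁, hj₁, hj₁a⟩ := h
        exact ⟨i, j₁, hj₁a, (Finset.mem_filter.mp hj₁).2⟩
      · rw [hB, Finset.mem_image] at h
        obtain ⟨x, hx, hxa⟩ := h
        exact ⟨x, j₀, hxa, (Finset.mem_filter.mp (Finset.mem_of_mem_erase hx)).2⟩
    obtain ⟨x, y, hxy, hne⟩ := this
    obtain ⟨s, hs⟩ := Option.ne_none_iff_exists'.mp hne
    rw [Finset.mem_image]
    exact ⟨s, Finset.mem_range.mpr (hlt x y s hs), by rw [← hxy, hs]⟩
  have hcards : m + (r - 1) ≤ S := by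
    have h1 := Finset.card_le_card hsub
    rw [Finset.card_union_of_disjoint hdisj, hAcard, hBcard] at h1
    have h2 : ((Finset.range S).image some).card ≤ S := by
      apply le_trans (Finset.card_image_le)
      simp
    omega
  have : r * K ⌈/⌉ F + r - 1 ≤ S := by omega
  rw [hr] at this
  convert this using 3
end

section
/- If a (K,F,Z,S) PDA exists with F−1 > Z, then a (⌈(F−Z)K/S⌉, F−⌈(F−Z)K/S⌉, Z−⌈(F−Z)K/S⌉+1, S') PDA exists with S' ≤ S−1. -/
open Finset Function

/-- The last clause of `IsPDA`, over arbitrary row and column types. -/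
def HasPDAExchange {ι κ : Type*} (P : ι → κ → Option ℕ) : Prop :=
  ∀ i₁ j₁ i₂ j₂ s, P i₁ j₁ = some s → P i₂ j₂ = some s → (i₁ ≠ i₂ ∨ j₁ ≠ j₂) →
    i₁ ≠ i₂ ∧ j₁ ≠ j₂ ∧ P i₁ j₂ = none ∧ P i₂ j₁ = none

namespace HasPDAExchange

variable {ι κ : Type*} {P : ι → κ → Option ℕ}

theorem comp {ι' κ' : Type*} (h : HasPDAExchange P) {r : ι' → ι} {c : κ' → κ}
    (hr : Injective r) (hc : Injective c) : HasPDAExchange fun i j => P (r i) (c j) := by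
  intro i₁ j₁ i₂ j₂ s h₁ h₂ hne
  obtain ⟨hi, hj, h₁₂, h₂₁⟩ := h _ _ _ _ s h₁ h₂ (hne.imp hr.ne hc.ne)
  exact ⟨fun e => hi (congrArg r e), fun e => hj (congrArg c e), h₁₂, h₂₁⟩

theorem map (h : HasPDAExchange P) {g : ℕ → ℕ} (hg : Set.InjOn g {s | ∃ i j, P i j = some s}) :
    HasPDAExchange fun i j => (P i j).map g := by
  intro i₁ j₁ i₂ j₂ s h₁ h₂ hne
  obtain ⟨s₁, hs₁, rfl⟩ := Option.map_eq_some_iff.1 h₁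
  obtain ⟨s₂, hs₂, hgs⟩ := Option.map_eq_some_iff.1 h₂
  obtain rfl := hg ⟨_, _, hs₂⟩ ⟨_, _, hs₁⟩ hgs
  obtain ⟨hi, hj, h₁₂, h₂₁⟩ := h _ _ _ _ _ hs₁ hs₂ hne
  exact ⟨hi, hj, by simp [h₁₂], by simp [h₂₁]⟩

theorem of_eq_some (h : HasPDAExchange P) {p q : ι × κ} {s : ℕ} (hp : P p.1 p.2 = some s)
    (hq : P q.1 q.2 = some s) (hpq : p ≠ q) :
    p.1 ≠ q.1 ∧ p.2 ≠ q.2 ∧ P p.1 q.2 = none ∧ P q.1 p.2 = none :=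
  h _ _ _ _ s hp hq (by contrapose! hpq; exact Prod.ext hpq.1 hpq.2)

variable {T : Finset (ι × κ)} {s₀ : ℕ}

theorem injOn_fst (h : HasPDAExchange P) (hT : ∀ p ∈ T, P p.1 p.2 = some s₀) :
    Set.InjOn Prod.fst (T : Set (ι × κ)) := fun p hp q hq e =>
  by_contra fun hpq => (h.of_eq_some (hT p hp) (hT q hq) hpq).1 e

theorem injOn_snd (h : HasPDAExchange P) (hT : ∀ p ∈ T, P p.1 p.2 = some s₀) :
    Set.InjOn Prod.snd (T : Set (ι × κ)) := fun p hp q hq e =>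
  by_contra fun hpq => (h.of_eq_some (hT p hp) (hT q hq) hpq).2.1 e

theorem card_filter_image_fst_eq_none [DecidableEq ι] (h : HasPDAExchange P)
    (hT : ∀ p ∈ T, P p.1 p.2 = some s₀) {p : ι × κ} (hp : p ∈ T) :
    #{i ∈ T.image Prod.fst | P i p.2 = none} = #T - 1 := by
  have hfilter : {i ∈ T.image Prod.fst | P i p.2 = none} = (T.image Prod.fst).erase p.1 := by
    ext i
    simp only [mem_filter, mem_erase, mem_image]
    constructor
    · rintro ⟨hiT, hi⟩
      refine ⟨?_, hiT⟩
      rintro rfl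
      simp [hT p hp] at hi
    · rintro ⟨hip, q, hq, rfl⟩
      have hqp : q ≠ p := by rintro rfl; exact hip rfl
      exact ⟨⟨q, hq, rfl⟩, (h.of_eq_some (hT q hq) (hT p hp) hqp).2.2.1⟩
  rw [hfilter, card_erase_of_mem (mem_image_of_mem _ hp), card_image_of_injOn (h.injOn_fst hT)]

end HasPDAExchange

theorem card_filter_orderEmbOfFin {α : Type*} [LinearOrder α] (s : Finset α) {k : ℕ}
    (h : #s = k) (q : α → Prop) [DecidablePred q] :
    #{i | q (s.orderEmbOfFin h i)} = #{a ∈ s | q a} := by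
  conv_rhs => rw [← map_orderEmbOfFin_univ s h, filter_map, card_map]
  rfl

theorem isPDA_zero_columns (F Z : ℕ) (Q : Fin F → Fin 0 → Option ℕ) : IsPDA 0 F Z 0 Q :=
  ⟨fun j => j.elim0, fun _ j => j.elim0, fun _ hs => absurd hs (Nat.not_lt_zero _),
    fun _ j => j.elim0⟩

section

variable {K F Z S : ℕ} {P : Fin F → Fin K → Option ℕ}

theorem exists_isPDA_le_card_of_mem (V : Finset ℕ) (hstar : ∀ j, #{i | P i j = none} = Z)
    (hV : ∀ i j s, P i j = some s → s ∈ V) (hex : HasPDAExchange P) :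
    ∃ S' ≤ #V, ∃ Q : Fin F → Fin K → Option ℕ, IsPDA K F Z S' Q := by
  classical
  set W := {s ∈ V | ∃ i j, P i j = some s}
  have hW : ∀ {i j s}, P i j = some s → s ∈ W := fun hs => mem_filter.2 ⟨hV _ _ _ hs, _, _, hs⟩
  let g : ℕ → ℕ := fun s => if h : s ∈ W then W.equivFin ⟨s, h⟩ else 0
  have hg : ∀ s (h : s ∈ W), g s = W.equivFin ⟨s, h⟩ := fun s h => dif_pos h
  refine ⟨#W, card_le_card (filter_subset _ _), fun i j => (P i j).map g, ?_, ?_, ?_, ?_⟩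
  · simpa using hstar
  · rintro i j _ h
    obtain ⟨s, hs, rfl⟩ := Option.map_eq_some_iff.1 h
    rw [hg s (hW hs)]
    exact Fin.isLt _
  · intro k hk
    set s := W.equivFin.symm ⟨k, hk⟩
    obtain ⟨i, j, hs⟩ := (mem_filter.1 s.2).2
    exact ⟨i, j, by simp [hs, hg _ s.2, s]⟩
  · refine hex.map fun s₁ hs₁ s₂ hs₂ e => ?_
    obtain ⟨_, _, h₁⟩ := hs₁
    obtain ⟨_, _, h₂⟩ := hs₂
    rw [hg _ (hW h₁), hg _ (hW h₂)] at e
    exact congrArg Subtype.val (W.equivFin.injective (Fin.ext e))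

namespace IsPDA

theorem card_filter_ne_none (hP : IsPDA K F Z S P) :
    #{p : Fin F × Fin K | P p.1 p.2 ≠ none} = (F - Z) * K := by
  have hcol : ∀ j, #{i | P i j ≠ none} = F - Z := fun j => by
    have := card_filter_add_card_filter_not (s := univ) fun i => P i j = none
    rw [hP.1 j, card_univ, Fintype.card_fin] at this
    simp only [ne_eq]
    omega
  rw [card_filter, Fintype.sum_prod_type_right]
  simp only [← card_filter, hcol, sum_const, card_univ, Fintype.card_fin, smul_eq_mul,
    mul_comm]

theorem exists_le_card_filter_eq_some (hP : IsPDA K F Z S P) (hS : 0 < S) :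
    ∃ s < S, (F - Z) * K ⌈/⌉ S ≤ #{p : Fin F × Fin K | P p.1 p.2 = some s} := by
  set t := (F - Z) * K ⌈/⌉ S
  rcases Nat.eq_zero_or_pos t with ht | ht
  · exact ⟨0, hS, by omega⟩
  have hlt : S * (t - 1) < #{p : Fin F × Fin K | P p.1 p.2 ≠ none} := by
    rw [hP.card_filter_ne_none, ← not_le, ← ceilDiv_le_iff_le_mul hS]
    omega
  have hmaps : ∀ p ∈ ({p | P p.1 p.2 ≠ none} : Finset (Fin F × Fin K)),
      (P p.1 p.2).getD 0 ∈ range S := by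
    intro p hp
    obtain ⟨s, hs⟩ := Option.ne_none_iff_exists'.1 (mem_filter.1 hp).2
    simpa [hs] using hP.2.1 _ _ _ hs
  obtain ⟨s, hs, hfiber⟩ := exists_lt_card_fiber_of_mul_lt_card_of_maps_to hmaps
    (by rwa [card_range])
  refine ⟨s, mem_range.1 hs, Nat.le_of_pred_lt (hfiber.trans_le (card_le_card ?_))⟩
  intro p hp
  simp only [mem_filter, mem_univ, true_and] at hp ⊢
  obtain ⟨s', hs'⟩ := Option.ne_none_iff_exists'.1 hp.1
  simpa [hs'] using hp.2

theorem exists_isPDA_subarray (hP : IsPDA K F Z S P) {s₀ : ℕ} (hs₀ : s₀ < S)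
    {T : Finset (Fin F × Fin K)} (hT : ∀ p ∈ T, P p.1 p.2 = some s₀) :
    ∃ S' ≤ S - 1, ∃ Q : Fin (F - #T) → Fin #T → Option ℕ,
      IsPDA #T (F - #T) (Z + 1 - #T) S' Q := by
  have hex : HasPDAExchange P := hP.2.2.2
  set R := T.image Prod.fst
  set C := T.image Prod.snd
  have hRc : #Rᶜ = F - #T := by
    rw [card_compl, card_image_of_injOn (hex.injOn_fst hT), Fintype.card_fin]
  have hC : #C = #T := card_image_of_injOn (hex.injOn_snd hT)
  set r := Rᶜ.orderEmbOfFin hRc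
  set c := C.orderEmbOfFin hC
  have hcol : ∀ j, ∃ p ∈ T, p.2 = c j := fun j => mem_image.1 (C.orderEmbOfFin_mem hC j)
  have hstar : ∀ j, #{i | P (r i) (c j) = none} = Z + 1 - #T := by
    intro j
    obtain ⟨p, hp, hpj⟩ := hcol j
    have hsplit : #{i ∈ R | P i p.2 = none} + #{i ∈ Rᶜ | P i p.2 = none} = Z := by
      rw [← card_union_of_disjoint (disjoint_filter_filter disjoint_compl_right),
        ← filter_union, union_compl, hP.1]
    rw [← hpj, card_filter_orderEmbOfFin Rᶜ hRc fun i => P i p.2 = none]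
    have hR : #{i ∈ R | P i p.2 = none} = #T - 1 := hex.card_filter_image_fst_eq_none hT hp
    have hT₀ : 0 < #T := card_pos.2 ⟨p, hp⟩
    omega
  have hval : ∀ i j s, P (r i) (c j) = some s → s ∈ (range S).erase s₀ := by
    intro i j s hs
    obtain ⟨p, hp, hpj⟩ := hcol j
    refine mem_erase.2 ⟨?_, mem_range.2 (hP.2.1 _ _ _ hs)⟩
    rintro rfl
    have hrow : r i ≠ p.1 := fun e => mem_compl.1 (Rᶜ.orderEmbOfFin_mem hRc i)
      (e ▸ mem_image_of_mem _ hp)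
    exact (hex _ _ _ _ _ hs (hT p hp) (Or.inl hrow)).2.1 hpj.symm
  obtain ⟨S', hS', Q, hQ⟩ :=
    exists_isPDA_le_card_of_mem _ hstar hval (hex.comp r.injective c.injective)
  exact ⟨S', hS'.trans (by simp [card_erase_of_mem, hs₀]), Q, hQ⟩

end IsPDA

end

theorem stmt7_general (K F Z S : ℕ)
    (P : Fin F → Fin K → Option ℕ) (hP : IsPDA K F Z S P) :
    ∃ S' ≤ S - 1,
      ∃ Q : Fin (F - (F - Z) * K ⌈/⌉ S) → Fin ((F - Z) * K ⌈/⌉ S) → Option ℕ,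
        IsPDA ((F - Z) * K ⌈/⌉ S) (F - (F - Z) * K ⌈/⌉ S)
          (Z + 1 - (F - Z) * K ⌈/⌉ S) S' Q := by
  rcases Nat.eq_zero_or_pos S with rfl | hS
  -- `⌈/⌉ 0` is `0`, so for `S = 0` the array asked for has no columns.
  · rw [ceilDiv_zero]
    exact ⟨0, le_rfl, fun _ j => j.elim0, isPDA_zero_columns _ _ _⟩
  obtain ⟨s₀, hs₀, hcard⟩ := hP.exists_le_card_filter_eq_some hS
  obtain ⟨T, hTsub, hT⟩ := exists_subset_card_eq hcard
  rw [← hT]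
  exact hP.exists_isPDA_subarray hs₀ fun p hp => (mem_filter.1 (hTsub hp)).2

/-- if a (K,F,Z,S) PDA exists with F−1 > Z, then, with
t = ⌈(F−Z)K/S⌉, a (t, F−t, Z−t+1, S') PDA exists for some S' ≤ S−1. -/
theorem stmt7 (K F Z S : ℕ) (hZF : Z + 1 < F)
    (P : Fin F → Fin K → Option ℕ) (hP : IsPDA K F Z S P) :
    ∃ S' ≤ S - 1,
      ∃ Q : Fin (F - (F - Z) * K ⌈/⌉ S) → Fin ((F - Z) * K ⌈/⌉ S) → Option ℕ,
        IsPDA ((F - Z) * K ⌈/⌉ S) (F - (F - Z) * K ⌈/⌉ S)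
          (Z + 1 - (F - Z) * K ⌈/⌉ S) S' Q :=
  stmt7_general K F Z S P hP
end

section
/- For any positive integers F, Z with Z < F such that (2F−2Z−1) does not divide (F−Z)F, every (F,F,Z,S) PDA satisfies S ≥ 2(F−Z). -/
/-!
Write `q = F - Z`, `T = F q` for the number of integer cells and `r i` for the number of integer
cells in row `i`. The cross of an integer cell in row `i` (the integer cells sharing its row or
column) has `r i + q - 1` cells, and the crosses of the cells carrying one symbol are pairwise
disjoint, since two such cells meet only in stars. So each symbol's crosses fill at most `T` cells,
and summing over the `S` symbols gives `∑ r i ^ 2 + (q - 1) T ≤ S T`. If `S ≤ 2 q - 1`, then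
`∑ r i ^ 2 ≤ q T = (∑ r i) ^ 2 / F` forces `r i = q` for all `i`, all the inequalities are tight,
and every symbol occurs exactly `T / (2 q - 1)` times; hence `2 q - 1` divides `q F`.
-/

open Finset

lemma Finset.eq_of_sum_eq_of_sum_sq_le {ι : Type*} {s : Finset ι} {f : ι → ℕ} {q : ℕ}
    (hsum : ∑ i ∈ s, f i = #s * q) (hsq : ∑ i ∈ s, f i ^ 2 ≤ #s * q ^ 2) :
    ∀ i ∈ s, f i = q := by
  have hvar : ∑ i ∈ s, ((f i : ℤ) - q) ^ 2 = ∑ i ∈ s, (f i : ℤ) ^ 2 - #s * q ^ 2 := by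
    have hsum' : ∑ i ∈ s, (f i : ℤ) = #s * q := by exact_mod_cast hsum
    simp only [sub_sq, sum_add_distrib, sum_sub_distrib, ← sum_mul, ← mul_sum, hsum', sum_const,
      nsmul_eq_mul]
    ring
  have hzero : ∑ i ∈ s, ((f i : ℤ) - q) ^ 2 = 0 := by
    refine le_antisymm ?_ (sum_nonneg fun i _ => sq_nonneg _)
    rw [hvar, sub_nonpos]
    exact_mod_cast hsq
  intro i hi
  have hi := (sum_eq_zero_iff_of_nonneg (fun i _ => sq_nonneg _)).1 hzero i hi
  rw [sq_eq_zero_iff, sub_eq_zero] at hi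
  exact_mod_cast hi

namespace PDA

variable {K F : ℕ} (P : Fin F → Fin K → Option ℕ)

def filled : Finset (Fin F × Fin K) := {c | (P c.1 c.2).isSome}

def symbolCells (s : ℕ) : Finset (Fin F × Fin K) := {c | P c.1 c.2 = some s}

def rowCount (i : Fin F) : ℕ := #{c ∈ filled P | c.1 = i}

def cross (c : Fin F × Fin K) : Finset (Fin F × Fin K) :=
  {d ∈ filled P | d.1 = c.1 ∨ d.2 = c.2}

lemma sum_filled_apply_fst (g : Fin F → ℕ) :
    ∑ c ∈ filled P, g c.1 = ∑ i, rowCount P i * g i := by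
  rw [← sum_fiberwise' (filled P) Prod.fst g]
  simp only [sum_const, smul_eq_mul, rowCount]

lemma card_filled_eq_sum_rowCount : #(filled P) = ∑ i, rowCount P i := by
  simpa using sum_filled_apply_fst P 1

lemma symbolCells_subset_filled (s : ℕ) : symbolCells P s ⊆ filled P := by
  intro c hc
  simp_all [symbolCells, filled]

lemma pairwiseDisjoint_symbolCells (A : Set ℕ) : A.PairwiseDisjoint (symbolCells P) := by
  intro s _ t _ hst
  refine disjoint_left.2 fun c hs ht => hst ?_
  simp only [symbolCells, mem_filter, mem_univ, true_and] at hs ht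
  exact Option.some.inj (hs.symm.trans ht)

end PDA

open PDA

namespace IsPDA

variable {K F Z S : ℕ} {P : Fin F → Fin K → Option ℕ}

lemma card_filled_filter_snd (hP : IsPDA K F Z S P) (j : Fin K) :
    #{c ∈ filled P | c.2 = j} = F - Z := by
  have hcol : {c ∈ filled P | c.2 = j} =
      ({i | (P i j).isSome} : Finset (Fin F)) ×ˢ ({j} : Finset (Fin K)) := by
    ext ⟨i, j'⟩
    simp only [filled, mem_filter, mem_univ, true_and, mem_product, mem_singleton]
    constructor <;> rintro ⟨h, rfl⟩ <;> exact ⟨h, rfl⟩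
  have hstars := card_filter_add_card_filter_not (s := univ) fun i => P i j = none
  simp only [hP.1 j, card_univ, Fintype.card_fin, ← Option.isSome_iff_ne_none] at hstars
  rw [hcol, card_product, card_singleton, mul_one]
  omega

lemma card_filled (hP : IsPDA K F Z S P) : #(filled P) = K * (F - Z) := by
  rw [card_eq_sum_card_fiberwise (f := Prod.snd) (t := univ) fun _ _ => mem_univ _]
  simp [hP.card_filled_filter_snd]

lemma card_cross_add_one (hP : IsPDA K F Z S P) {c : Fin F × Fin K} (hc : c ∈ filled P) :
    #(cross P c) + 1 = rowCount P c.1 + (F - Z) := by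
  have hinter : {d ∈ filled P | d.1 = c.1} ∩ {d ∈ filled P | d.2 = c.2} = {c} := by
    rw [← filter_and]
    ext d
    simp only [mem_filter, mem_singleton]
    constructor
    · rintro ⟨-, h1, h2⟩; exact Prod.ext h1 h2
    · rintro rfl; exact ⟨hc, rfl, rfl⟩
  rw [cross, filter_or, ← hP.card_filled_filter_snd c.2, rowCount, ← card_union_add_card_inter,
    hinter, card_singleton]

lemma pairwiseDisjoint_cross (hP : IsPDA K F Z S P) (s : ℕ) :
    (symbolCells P s : Set (Fin F × Fin K)).PairwiseDisjoint (cross P) := by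
  intro c hc c' hc' hne
  simp only [symbolCells, coe_filter, mem_univ, true_and, Set.mem_ofPred_eq] at hc hc'
  obtain ⟨hrow, hcol, h₁, h₂⟩ :=
    hP.2.2.2 c.1 c.2 c'.1 c'.2 s hc hc' (by contrapose! hne; exact Prod.ext hne.1 hne.2)
  refine disjoint_left.2 fun d hd hd' => ?_
  simp only [cross, filled, mem_filter, mem_univ, true_and] at hd hd'
  obtain ⟨hd, h | h⟩ := hd <;> obtain ⟨-, h' | h'⟩ := hd'
  · exact hrow (h.symm.trans h')
  · simp [h, h', h₁] at hd
  · simp [h, h', h₂] at hd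
  · exact hcol (h.symm.trans h')

lemma sum_card_cross_le (hP : IsPDA K F Z S P) (s : ℕ) :
    ∑ c ∈ symbolCells P s, #(cross P c) ≤ #(filled P) := by
  rw [← card_biUnion (hP.pairwiseDisjoint_cross s)]
  exact card_le_card (biUnion_subset.2 fun _ _ => filter_subset _ _)

lemma sum_sum_card_cross_le (hP : IsPDA K F Z S P) :
    ∑ t ∈ range S, ∑ c ∈ symbolCells P t, #(cross P c) ≤ S * #(filled P) := by
  simpa using sum_le_sum (s := range S) fun t _ => hP.sum_card_cross_le t

lemma filled_eq_biUnion (hP : IsPDA K F Z S P) :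
    filled P = (range S).biUnion (symbolCells P) := by
  ext c
  simp only [filled, symbolCells, mem_filter, mem_univ, true_and, mem_biUnion, mem_range,
    Option.isSome_iff_exists]
  exact ⟨fun ⟨s, hs⟩ => ⟨s, hP.2.1 _ _ _ hs, hs⟩, fun ⟨s, _, hs⟩ => ⟨s, hs⟩⟩

lemma sum_range_sum_symbolCells (hP : IsPDA K F Z S P) (f : Fin F × Fin K → ℕ) :
    ∑ t ∈ range S, ∑ c ∈ symbolCells P t, f c = ∑ c ∈ filled P, f c := by
  rw [hP.filled_eq_biUnion, sum_biUnion (pairwiseDisjoint_symbolCells P _)]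

lemma sum_sum_card_cross_add (hP : IsPDA K F Z S P) :
    ∑ t ∈ range S, ∑ c ∈ symbolCells P t, #(cross P c) + #(filled P) =
      ∑ i, rowCount P i * rowCount P i + (F - Z) * #(filled P) := by
  rw [hP.sum_range_sum_symbolCells, card_eq_sum_ones, ← sum_add_distrib,
    sum_congr rfl fun c hc => hP.card_cross_add_one hc, sum_add_distrib,
    sum_filled_apply_fst, sum_const, smul_eq_mul, mul_comm, card_eq_sum_ones]

lemma pos_of_lt (hP : IsPDA K F Z S P) (hK : 0 < K) (hZF : Z < F) : 0 < S := by
  obtain ⟨c, hc⟩ := card_pos.1 (by rw [hP.card_filled]; exact Nat.mul_pos hK (by omega))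
  simp only [filled, mem_filter, mem_univ, true_and, Option.isSome_iff_exists] at hc
  obtain ⟨s, hs⟩ := hc
  exact Nat.zero_lt_of_lt (hP.2.1 _ _ _ hs)

variable {P : Fin F → Fin F → Option ℕ}

lemma rowCount_eq (hP : IsPDA F F Z S P) (hS : S < 2 * (F - Z)) (i : Fin F) :
    rowCount P i = F - Z := by
  have hcross := hP.sum_sum_card_cross_add
  have hle := hP.sum_sum_card_cross_le
  have hS' := Nat.mul_le_mul_right #(filled P) (show S + 1 ≤ 2 * (F - Z) by omega)
  have hT := hP.card_filled
  refine eq_of_sum_eq_of_sum_sq_le (s := univ) ?_ ?_ i (mem_univ i)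
  · rw [← card_filled_eq_sum_rowCount, hT, card_univ, Fintype.card_fin]
  · simp only [sq, card_univ, Fintype.card_fin]
    rw [hT] at hcross hle hS'
    linarith

lemma card_symbolCells_mul (hP : IsPDA F F Z S P) (hS : S < 2 * (F - Z)) {t : ℕ} (ht : t < S) :
    #(symbolCells P t) * (2 * (F - Z) - 1) = F * (F - Z) := by
  have hw : ∀ c ∈ filled P, #(cross P c) = 2 * (F - Z) - 1 := fun c hc => by
    have := hP.card_cross_add_one hc
    rw [hP.rowCount_eq hS] at this
    omega
  have htot : ∑ t ∈ range S, ∑ c ∈ symbolCells P t, #(cross P c) =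
      #(filled P) * (2 * (F - Z) - 1) := by
    rw [hP.sum_range_sum_symbolCells, sum_congr rfl hw, sum_const, smul_eq_mul]
  have hS' := Nat.mul_le_mul_left #(filled P) (show S ≤ 2 * (F - Z) - 1 by omega)
  have htight := (sum_eq_sum_iff_of_le (s := range S) fun t _ => hP.sum_card_cross_le t).1 (by
    rw [sum_const, card_range, smul_eq_mul]
    exact le_antisymm hP.sum_sum_card_cross_le (by rw [htot, mul_comm]; exact hS'))
  rw [← hP.card_filled, ← htight t (mem_range.2 ht),
    sum_congr rfl fun c hc => hw c (symbolCells_subset_filled P t hc), sum_const, smul_eq_mul]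

end IsPDA

theorem stmt8_general (F Z S : ℕ) (hZF : Z < F)
    (hdvd : ¬ (2 * F - 2 * Z - 1) ∣ (F - Z) * F)
    (P : Fin F → Fin F → Option ℕ) (hP : IsPDA F F Z S P) :
    2 * (F - Z) ≤ S := by
  by_contra! hS
  have hcard := hP.card_symbolCells_mul hS (hP.pos_of_lt (by omega) hZF)
  refine hdvd ⟨#(symbolCells P 0), ?_⟩
  rw [show 2 * F - 2 * Z - 1 = 2 * (F - Z) - 1 by omega, mul_comm, ← hcard, mul_comm]

/-- if Z < F and (2F−2Z−1) ∤ (F−Z)F, then every (F,F,Z,S) PDA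
satisfies S ≥ 2(F−Z). -/
theorem stmt8 (F Z S : ℕ) (hZ : 0 < Z) (hZF : Z < F)
    (hdvd : ¬ (2 * F - 2 * Z - 1) ∣ (F - Z) * F)
    (P : Fin F → Fin F → Option ℕ) (hP : IsPDA F F Z S P) :
    2 * (F - Z) ≤ S :=
  stmt8_general F Z S hZF hdvd P hP
end

section
/- For positive integer k and nonnegative integer t ≤ k, the array P indexed by t-subsets T of [0,k) (rows) and elements j ∈ [0,k) (columns), with P(T,j) = f(T ∪ {j}) if j ∉ T and P(T,j) = * otherwise, where f is any fixed bijection from (t+1)-subsets of [0,k) to [0, C(k,t+1)), is a (k, C(k,t), C(k−1,t−1), C(k,t+1)) PDA. -/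
/-!
Row `T` and column `j` of the array carry the `(t+1)`-set `insert j T`. A `(t+1)`-set `A`
occurs once for each `j ∈ A`, namely in row `A.erase j`, so every label is used. If two
distinct cells carry the same set `A = insert j₁ T₁ = insert j₂ T₂`, then `j₁ ≠ j₂`
(otherwise `T₁ = A.erase j₁ = T₂`), hence `j₂ ∈ T₁` and `j₁ ∈ T₂`: both crossing cells are
stars. The stars of column `j` are the `t`-sets containing `j`.
-/

/-- A `(K, F, Z, S)` placement delivery array with rows indexed by `ι` and columns
indexed by `κ` (star encoded as `none`): `ι` has cardinality `F`, `κ` has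
cardinality `K`, each column contains exactly `Z` stars, every integer in `[0,S)`
appears, and any two equal integer entries lie in distinct rows and distinct
columns with stars at the two crossing positions. -/
def IsPDAOn {ι κ : Type*} [Fintype ι] [Fintype κ] (K F Z S : ℕ)
    (P : ι → κ → Option ℕ) : Prop :=
  Fintype.card ι = F ∧ Fintype.card κ = K ∧
  (∀ j, (Finset.univ.filter fun i => P i j = none).card = Z) ∧
  (∀ i j s, P i j = some s → s < S) ∧
  (∀ s, s < S → ∃ i j, P i j = some s) ∧
  (∀ i₁ j₁ i₂ j₂ s, P i₁ j₁ = some s → P i₂ j₂ = some s → (i₁ ≠ i₂ ∨ j₁ ≠ j₂) →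
    i₁ ≠ i₂ ∧ j₁ ≠ j₂ ∧ P i₁ j₂ = none ∧ P i₂ j₁ = none)

open Finset

namespace Finset

variable {α : Type*} [DecidableEq α] {a b : α} {s t : Finset α}

lemma eq_of_insert_eq_insert (hs : a ∉ s) (ht : a ∉ t) (h : insert a s = insert a t) :
    s = t := by
  rw [← erase_insert hs, h, erase_insert ht]

lemma mem_of_insert_eq_insert (hab : a ≠ b) (h : insert a s = insert b t) : b ∈ s :=
  (mem_insert.1 (h ▸ mem_insert_self b t)).resolve_left hab.symm

end Finset

lemma card_filter_mem_subtype_card_eq {α : Type*} [DecidableEq α] [Fintype α] (a : α) (t : ℕ) :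
    #{T : {T : Finset α // #T = t} | a ∈ T.1} =
      if t = 0 then 0 else (Fintype.card α - 1).choose (t - 1) := by
  split_ifs with ht
  · subst ht
    simp only [card_eq_zero, filter_eq_empty_iff, mem_univ, true_implies]
    rintro ⟨T, hT⟩
    simp [card_eq_zero.1 hT]
  · calc #{T : {T : Finset α // #T = t} | a ∈ T.1}
        = #((univ.powersetCard t).filter ({a} ⊆ ·)) := by
          refine card_bij (fun T _ => T.1) ?_ (fun _ _ _ _ => Subtype.ext) ?_
          · simp only [mem_filter, mem_univ, true_and, mem_powersetCard_univ, singleton_subset_iff]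
            exact fun T haT => ⟨T.2, haT⟩
          · simp only [mem_filter, mem_powersetCard_univ, singleton_subset_iff]
            exact fun T ⟨hT, haT⟩ => ⟨⟨T, hT⟩, by simpa using haT, rfl⟩
      _ = (Fintype.card α - 1).choose (t - 1) := by
          rw [card_filter_powersetCard_subset _ _ _ (subset_univ _)
            (by simpa using Nat.one_le_iff_ne_zero.2 ht), card_univ, card_singleton]

section InsertArray

variable {α : Type*} [DecidableEq α] {t m : ℕ}

def insertArray (f : {A : Finset α // #A = t + 1} ≃ Fin m) (T : {T : Finset α // #T = t})
    (j : α) : Option ℕ :=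
  if h : j ∈ T.1 then none
  else some (f ⟨insert j T.1, by rw [card_insert_of_notMem h, T.2]⟩ : Fin m)

variable (f : {A : Finset α // #A = t + 1} ≃ Fin m) {T : {T : Finset α // #T = t}} {j : α}

lemma insertArray_eq_none_iff : insertArray f T j = none ↔ j ∈ T.1 := by
  unfold insertArray
  split_ifs <;> simpa

lemma insertArray_of_notMem (h : j ∉ T.1) :
    insertArray f T j =
      some ((f ⟨insert j T.1, by rw [card_insert_of_notMem h, T.2]⟩ : Fin m) : ℕ) :=
  dif_neg h

lemma insertArray_eq_some {s : ℕ} (h : insertArray f T j = some s) :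
    j ∉ T.1 ∧ ∃ hs : s < m, (f.symm ⟨s, hs⟩).1 = insert j T.1 := by
  by_cases hj : j ∈ T.1
  · simp [insertArray, hj] at h
  · rw [insertArray_of_notMem f hj, Option.some.injEq] at h
    subst h
    exact ⟨hj, (f _).isLt, by simp⟩

lemma insertArray_surjective {s : ℕ} (hs : s < m) : ∃ T j, insertArray f T j = some s := by
  set A := f.symm ⟨s, hs⟩
  obtain ⟨j, hj⟩ := card_pos.1 (A.2.trans_gt t.succ_pos)
  refine ⟨⟨A.1.erase j, by rw [card_erase_of_mem hj, A.2, Nat.add_sub_cancel]⟩, j, ?_⟩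
  rw [insertArray_of_notMem f (notMem_erase j _)]
  have hA : ∀ h, (⟨insert j (A.1.erase j), h⟩ : {A : Finset α // #A = t + 1}) = A :=
    fun _ => Subtype.ext (insert_erase hj)
  simp [hA, A]

lemma insertArray_crossing {T₁ T₂ : {T : Finset α // #T = t}} {j₁ j₂ : α} {s : ℕ}
    (h₁ : insertArray f T₁ j₁ = some s) (h₂ : insertArray f T₂ j₂ = some s)
    (hne : T₁ ≠ T₂ ∨ j₁ ≠ j₂) :
    T₁ ≠ T₂ ∧ j₁ ≠ j₂ ∧ insertArray f T₁ j₂ = none ∧ insertArray f T₂ j₁ = none := by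
  obtain ⟨hj₁, _, hA₁⟩ := insertArray_eq_some f h₁
  obtain ⟨hj₂, _, hA₂⟩ := insertArray_eq_some f h₂
  have hins : insert j₁ T₁.1 = insert j₂ T₂.1 := hA₁.symm.trans hA₂
  have hj : j₁ ≠ j₂ := by
    rintro rfl
    exact hne.elim (· (Subtype.ext (eq_of_insert_eq_insert hj₁ hj₂ hins))) (· rfl)
  have hj₁T₂ : j₁ ∈ T₂.1 := mem_of_insert_eq_insert hj.symm hins.symm
  exact ⟨fun hT => hj₁ (hT ▸ hj₁T₂), hj,
    (insertArray_eq_none_iff f).2 (mem_of_insert_eq_insert hj hins),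
    (insertArray_eq_none_iff f).2 hj₁T₂⟩

theorem isPDAOn_insertArray [Fintype α] :
    IsPDAOn (Fintype.card α) ((Fintype.card α).choose t)
      (if t = 0 then 0 else (Fintype.card α - 1).choose (t - 1)) m (insertArray f) := by
  refine ⟨by simp, rfl, fun j => ?_, fun T j s h => (insertArray_eq_some f h).2.1,
    fun s hs => insertArray_surjective f hs,
    fun T₁ j₁ T₂ j₂ s h₁ h₂ hne => insertArray_crossing f h₁ h₂ hne⟩
  simp only [insertArray_eq_none_iff]
  exact card_filter_mem_subtype_card_eq j t

end InsertArray

/-- the AN array, with rows indexed by t-subsets T of [0,k) and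
columns by j ∈ [0,k), entry f(T ∪ {j}) if j ∉ T and * otherwise (f any bijection
from (t+1)-subsets to [0, C(k,t+1))), is a (k, C(k,t), C(k−1,t−1), C(k,t+1)) PDA
(with the convention C(k−1,−1) = 0). -/
theorem stmt9 (k t : ℕ)
    (f : {A : Finset (Fin k) // A.card = t + 1} ≃ Fin (Nat.choose k (t + 1))) :
    IsPDAOn k (Nat.choose k t)
      (if t = 0 then 0 else Nat.choose (k - 1) (t - 1)) (Nat.choose k (t + 1))
      (fun (T : {T : Finset (Fin k) // T.card = t}) (j : Fin k) =>
        if h : j ∈ T.1 then none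
        else some (f ⟨insert j T.1, by
          rw [Finset.card_insert_of_notMem h, T.2]⟩ : Fin (Nat.choose k (t + 1)))) := by
  have h := isPDAOn_insertArray f
  rw [Fintype.card_fin] at h
  exact h
end

section
/- If P_i is a (K_i, F, Z, S_i) PDA with integer entries in [0,S_i) for 0 ≤ i < m, then the horizontal concatenation (P_0, P_1 + S_0, P_2 + S_0 + S_1, ..., P_{m−1} + Σ_{i<m−1} S_i), where P + s means adding s to every integer entry and leaving stars unchanged, is a (Σ K_i, F, Z, Σ S_i) PDA. -/
/-!
Block `i` of the concatenation only uses the integers in `[o i, o i + S i)`, where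
`o i = S 0 + ⋯ + S (i - 1)`, and these intervals tile `[0, ΣS)` (this is the bijection
`finSigmaFinEquiv`). So an integer of the concatenation is hit exactly by the shifted
occurrences of one integer of one block: the star and coverage conditions are inherited
blockwise, and two equal entries always lie in the same block, where the PDA condition of
that block applies.
-/

open Finset

theorem Fin.sum_castLE_eq_sum_Iio {M : Type*} [AddCommMonoid M] {m : ℕ} (f : Fin m → M)
    (i : Fin m) : ∑ j : Fin i, f (Fin.castLE i.2.le j) = ∑ j ∈ Iio i, f j := by
  have : Iio i = univ.map (Fin.castLEEmb i.2.le) := by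
    ext j
    simp only [mem_Iio, mem_map, mem_univ, true_and, Fin.castLEEmb_apply]
    exact ⟨fun h => ⟨⟨j, h⟩, rfl⟩, by rintro ⟨k, rfl⟩; exact k.2⟩
  rw [this, sum_map]
  rfl

section Offsets

variable {m : ℕ} {n : Fin m → ℕ}

theorem val_finSigmaFinEquiv (k : Σ i : Fin m, Fin (n i)) :
    (finSigmaFinEquiv k : ℕ) = k.2 + ∑ j ∈ Iio k.1, n j := by
  rw [finSigmaFinEquiv_apply, Fin.sum_castLE_eq_sum_Iio, add_comm]

theorem add_sum_Iio_lt_sum {i : Fin m} {t : ℕ} (ht : t < n i) :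
    t + ∑ j ∈ Iio i, n j < ∑ j, n j := by
  simpa only [val_finSigmaFinEquiv] using
    (finSigmaFinEquiv (⟨i, ⟨t, ht⟩⟩ : Σ i, Fin (n i))).isLt

theorem exists_eq_add_sum_Iio {s : ℕ} (hs : s < ∑ j, n j) :
    ∃ i t, t < n i ∧ s = t + ∑ j ∈ Iio i, n j := by
  obtain ⟨⟨i, t⟩, hk⟩ := finSigmaFinEquiv.surjective (⟨s, hs⟩ : Fin (∑ j, n j))
  exact ⟨i, t, t.2, by rw [← val_finSigmaFinEquiv ⟨i, t⟩, hk]⟩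

theorem eq_of_add_sum_Iio_eq {i i' : Fin m} {t t' : ℕ} (ht : t < n i) (ht' : t' < n i')
    (h : t + ∑ j ∈ Iio i, n j = t' + ∑ j ∈ Iio i', n j) : i = i' ∧ t = t' := by
  have hk : (⟨i, ⟨t, ht⟩⟩ : Σ i, Fin (n i)) = ⟨i', ⟨t', ht'⟩⟩ :=
    finSigmaFinEquiv.injective (Fin.ext (by simpa only [val_finSigmaFinEquiv] using h))
  obtain ⟨rfl, hk⟩ := Sigma.mk.inj_iff.1 hk
  exact ⟨rfl, by simpa using hk⟩

end Offsets

theorem stmt13_general (m F Z : ℕ) (K S : Fin m → ℕ)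
    (P : ∀ i, Fin F → Fin (K i) → Option ℕ)
    (hP : ∀ i, IsPDA (K i) F Z (S i) (P i)) :
    IsPDAOn (∑ i, K i) F Z (∑ i, S i)
      (fun (r : Fin F) (c : Σ i : Fin m, Fin (K i)) =>
        (P c.1 r c.2).map (· + ∑ i' ∈ Finset.Iio c.1, S i')) := by
  have entry_lt {i r c t} (h : P i r c = some t) : t < S i := (hP i).2.1 r c t h
  refine ⟨Fintype.card_fin F, by simp, fun ⟨i, c⟩ => by simpa using (hP i).1 c, ?_, ?_, ?_⟩
  · rintro r ⟨i, c⟩ s h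
    obtain ⟨t, ht, rfl⟩ := Option.map_eq_some_iff.1 h
    exact add_sum_Iio_lt_sum (entry_lt ht)
  · intro s hs
    obtain ⟨i, t, ht, rfl⟩ := exists_eq_add_sum_Iio hs
    obtain ⟨r, c, hrc⟩ := (hP i).2.2.1 t ht
    exact ⟨r, ⟨i, c⟩, by simp [hrc]⟩
  · rintro r₁ ⟨i₁, c₁⟩ r₂ ⟨i₂, c₂⟩ s h₁ h₂ hne
    obtain ⟨t₁, ht₁, rfl⟩ := Option.map_eq_some_iff.1 h₁
    obtain ⟨t₂, ht₂, hs⟩ := Option.map_eq_some_iff.1 h₂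
    obtain ⟨rfl, rfl⟩ := eq_of_add_sum_Iio_eq (entry_lt ht₂) (entry_lt ht₁) hs
    have hne' : r₁ ≠ r₂ ∨ c₁ ≠ c₂ := hne.imp_right (mt (congrArg _))
    obtain ⟨hr, hc, h₁₂, h₂₁⟩ := (hP i₂).2.2.2 r₁ c₁ r₂ c₂ t₂ ht₁ ht₂ hne'
    exact ⟨hr, fun h => hc (by simpa using h), by simp [h₁₂], by simp [h₂₁]⟩

/-- horizontally concatenating (K_i, F, Z, S_i) PDAs, shifting the
integer entries of the i-th block by S_0 + ⋯ + S_{i−1}, yields a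
(ΣK_i, F, Z, ΣS_i) PDA. -/
theorem stmt13 (m F Z : ℕ) (hm : 2 ≤ m) (K S : Fin m → ℕ)
    (P : ∀ i, Fin F → Fin (K i) → Option ℕ)
    (hP : ∀ i, IsPDA (K i) F Z (S i) (P i)) :
    IsPDAOn (∑ i, K i) F Z (∑ i, S i)
      (fun (r : Fin F) (c : Σ i : Fin m, Fin (K i)) =>
        (P c.1 r c.2).map (· + ∑ i' ∈ Finset.Iio c.1, S i')) :=
  stmt13_general m F Z K S P hP
end

section
/- For any positive integers k, m and 0 ≤ t ≤ k, S(m·C(k,t), k, t) = m·C(k,t+1); i.e., concatenating m copies of the transposed AN PDA (with shifted integer sets) yields an optimal PDA. -/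
lemma pda_exists (k t m : ℕ) (ht : t ≤ k) :
    ∃ P : Fin k → Fin (m * Nat.choose k t) → Option ℕ,
      IsPDA (m * Nat.choose k t) k t (m * Nat.choose k (t+1)) P := by
  classical
  have hcard1 : Fintype.card (Fin m × {T : Finset (Fin k) // T.card = t})
      = m * Nat.choose k t := by
    simp [Fintype.card_finset_len]
  have hcard2 : Fintype.card (Fin m × {U : Finset (Fin k) // U.card = t+1})
      = m * Nat.choose k (t+1) := by
    simp [Fintype.card_finset_len]
  set σ := (Fintype.equivFinOfCardEq hcard1).symm with hσ
  set τ := Fintype.equivFinOfCardEq hcard2 with hτ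
  refine ⟨fun i j => if h : i ∈ (σ j).2.val then none
      else some (τ ((σ j).1, ⟨insert i (σ j).2.val, by
        rw [Finset.card_insert_of_notMem h, (σ j).2.2]⟩)).val, ?_, ?_, ?_, ?_⟩
  · intro j
    have : (Finset.univ.filter fun i : Fin k =>
        (if h : i ∈ (σ j).2.val then none
          else some (τ ((σ j).1, ⟨insert i (σ j).2.val, by
            rw [Finset.card_insert_of_notMem h, (σ j).2.2]⟩)).val) = none)
        = Finset.univ.filter (fun i => i ∈ (σ j).2.val) := by
      apply Finset.filter_congr
      intro i _
      by_cases h : i ∈ (σ j).2.val <;> simp [h]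
    rw [this, Finset.filter_univ_mem, (σ j).2.2]
  · intro i j s hs
    by_cases h : i ∈ (σ j).2.val
    · simp [h] at hs
    · simp only [h, dite_false] at hs
      rw [← Option.some_inj.mp hs]
      exact (τ _).isLt
  · intro s hs
    set x := τ.symm ⟨s, hs⟩ with hx
    obtain ⟨i, hi⟩ : x.2.val.Nonempty := by
      rw [← Finset.card_pos, x.2.2]; omega
    have hT : (x.2.val.erase i).card = t := by
      rw [Finset.card_erase_of_mem hi, x.2.2]; rfl
    refine ⟨i, σ.symm (x.1, ⟨x.2.val.erase i, hT⟩), ?_⟩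
    have hσs : σ (σ.symm (x.1, ⟨x.2.val.erase i, hT⟩)) = (x.1, ⟨x.2.val.erase i, hT⟩) :=
      σ.apply_symm_apply _
    have hni : i ∉ ((σ (σ.symm (x.1, ⟨x.2.val.erase i, hT⟩))).2 : Finset (Fin k)) := by
      rw [hσs]; exact Finset.notMem_erase _ _
    simp only [hni, dite_false]
    congr 1
    have hpair : ((σ (σ.symm (x.1, ⟨x.2.val.erase i, hT⟩))).1,
        (⟨insert i (σ (σ.symm (x.1, ⟨x.2.val.erase i, hT⟩))).2.val, by
          rw [Finset.card_insert_of_notMem hni, (σ _).2.2]⟩ :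
          {U : Finset (Fin k) // U.card = t+1})) = x := by
      rw [Prod.ext_iff]
      constructor
      · show (σ (σ.symm (x.1, ⟨x.2.val.erase i, hT⟩))).1 = x.1
        exact congrArg Prod.fst hσs
      · apply Subtype.ext
        simp only [hσs]
        exact Finset.insert_erase hi
    rw [hpair, hx, τ.apply_symm_apply]
  · intro i₁ j₁ i₂ j₂ s h1 h2 hne
    by_cases m1 : i₁ ∈ (σ j₁).2.val
    · simp [m1] at h1
    by_cases m2 : i₂ ∈ (σ j₂).2.val
    · simp [m2] at h2
    simp only [m1, m2, dite_false, Option.some_inj] at h1 h2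
    have hval : τ ((σ j₁).1, ⟨insert i₁ (σ j₁).2.val, _⟩)
        = τ ((σ j₂).1, ⟨insert i₂ (σ j₂).2.val, _⟩) := Fin.val_injective (h1.trans h2.symm)
    have heq := τ.injective hval
    have hc := congrArg Prod.fst heq
    have hU := congrArg (fun p : Fin m × {U : Finset (Fin k) // U.card = t+1} =>
      (Prod.snd p).val) heq
    simp only at hc hU
    have hii : i₁ ≠ i₂ := by
      intro hi12
      subst hi12
      have hTT : (σ j₁).2.val = (σ j₂).2.val := by
        have := congrArg (Finset.erase · i₁) hU
        simpa [Finset.erase_insert m1, Finset.erase_insert m2] using this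
      have : j₁ = j₂ := by
        apply σ.injective
        rw [Prod.ext_iff]
        exact ⟨hc, Subtype.ext hTT⟩
      rcases hne with h | h
      · exact h rfl
      · exact h this
    have hi1 : i₁ ∈ (σ j₂).2.val := by
      have : i₁ ∈ insert i₂ (σ j₂).2.val := hU ▸ Finset.mem_insert_self _ _
      rcases Finset.mem_insert.mp this with h | h
      · exact absurd h hii
      · exact h
    have hi2 : i₂ ∈ (σ j₁).2.val := by
      have : i₂ ∈ insert i₁ (σ j₁).2.val := hU ▸ Finset.mem_insert_self _ _
      rcases Finset.mem_insert.mp this with h | h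
      · exact absurd h.symm hii
      · exact h
    have hjj : j₁ ≠ j₂ := by
      intro h; subst h; exact m1 hi1
    exact ⟨hii, hjj, by simp [hi1], by simp [hi2]⟩

lemma pda_lower (t m : ℕ) : ∀ F K S : ℕ, ∀ P : Fin F → Fin K → Option ℕ,
    IsPDA K F t S P → m * Nat.choose F t ≤ K → m * Nat.choose F (t+1) ≤ S := by
  intro F
  induction F with
  | zero => intro K S P _ _; simp
  | succ n IH =>
    intro K S P hP hK
    classical
    by_cases htn : n + 1 ≤ t
    · have h0 : Nat.choose (n+1) (t+1) = 0 := Nat.choose_eq_zero_of_lt (by omega)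
      simp [h0]
    push_neg at htn
    obtain ⟨h1, h2, h3, h4⟩ := hP
    set cnt : Fin (n+1) → ℕ :=
      fun x => (Finset.univ.filter fun j => ¬ (P x j = none)).card with hcnt
    -- column integer counts
    have hcol : ∀ j : Fin K,
        (Finset.univ.filter fun x => ¬ (P x j = none)).card = n + 1 - t := by
      intro j
      have := Finset.card_filter_add_card_filter_not
        (s := (Finset.univ : Finset (Fin (n+1)))) (fun x => P x j = none)
      rw [h1 j] at this
      simp only [Finset.card_univ, Fintype.card_fin] at this
      omega
    -- double counting
    have htot : ∑ x : Fin (n+1), cnt x = K * (n + 1 - t) := by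
      have lhs : ∑ x : Fin (n+1), cnt x
          = ∑ x : Fin (n+1), ∑ j : Fin K, if ¬ (P x j = none) then 1 else 0 := by
        apply Finset.sum_congr rfl
        intro x _
        exact Finset.card_filter _ _
      rw [lhs, Finset.sum_comm]
      have : ∀ j : Fin K,
          (∑ x : Fin (n+1), if ¬ (P x j = none) then 1 else 0) = n + 1 - t := by
        intro j
        rw [← Finset.card_filter]
        exact hcol j
      rw [Finset.sum_congr rfl (fun j _ => this j)]
      simp [Finset.sum_const, Finset.card_univ, Nat.mul_comm]
    -- pigeonhole: a good row exists
    have hex : ∃ x : Fin (n+1), K * (n + 1 - t) ≤ (n+1) * cnt x := by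
      by_contra hcon
      push_neg at hcon
      have hlt : ∑ x : Fin (n+1), (n+1) * cnt x
          < ∑ _x : Fin (n+1), K * (n + 1 - t) :=
        Finset.sum_lt_sum_of_nonempty ⟨⟨0, by omega⟩, Finset.mem_univ _⟩
          (fun x _ => hcon x)
      rw [← Finset.mul_sum, htot] at hlt
      simp only [Finset.sum_const, Finset.card_univ, Fintype.card_fin,
        smul_eq_mul] at hlt
      omega
    obtain ⟨i, hKa⟩ := hex
    set A : Finset (Fin K) := Finset.univ.filter fun j => ¬ (P i j = none) with hA
    set a : ℕ := A.card with ha_def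
    have hAmem : ∀ j ∈ A, ¬ (P i j = none) := by
      intro j hj; exact (Finset.mem_filter.mp hj).2
    -- a ≥ m * C(n,t)
    have ha : m * Nat.choose n t ≤ a := by
      have h5 : m * Nat.choose (n+1) t * (n + 1 - t) ≤ K * (n + 1 - t) :=
        Nat.mul_le_mul_right _ hK
      have h6 : m * Nat.choose (n+1) t * (n + 1 - t) = (n + 1) * (m * Nat.choose n t) := by
        have := Nat.choose_mul_succ_eq n t
        calc m * Nat.choose (n+1) t * (n + 1 - t)
            = m * (Nat.choose (n+1) t * (n + 1 - t)) := by ring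
          _ = m * (Nat.choose n t * (n + 1)) := by rw [← this]
          _ = (n + 1) * (m * Nat.choose n t) := by ring
      have h7 : (n + 1) * (m * Nat.choose n t) ≤ (n+1) * a := by
        calc (n + 1) * (m * Nat.choose n t) = m * Nat.choose (n+1) t * (n + 1 - t) := h6.symm
          _ ≤ K * (n + 1 - t) := h5
          _ ≤ (n+1) * cnt i := hKa
          _ = (n+1) * a := rfl
      exact Nat.le_of_mul_le_mul_left h7 (by omega)
    -- the subarray
    set col : Fin a → Fin K := fun j' => (A.equivFin.symm j' : Fin K) with hcoldef
    have hcolA : ∀ j', col j' ∈ A := fun j' => (A.equivFin.symm j').2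
    have hcol_inj : Function.Injective col := by
      intro x y hxy
      exact A.equivFin.symm.injective (Subtype.ext hxy)
    set B : Finset ℕ := (Finset.range S).filter
      (fun s => ∃ i' j', P (i.succAbove i') (col j') = some s) with hB
    have hmemB : ∀ (i' : Fin n) (j' : Fin a) (s : ℕ),
        P (i.succAbove i') (col j') = some s → s ∈ B := by
      intro i' j' s hs
      rw [hB, Finset.mem_filter, Finset.mem_range]
      exact ⟨h2 _ _ _ hs, i', j', hs⟩
    set e := B.equivFin with he
    set f : ℕ → ℕ := fun s => if h : s ∈ B then (e ⟨s, h⟩ : ℕ) else 0 with hf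
    have hf_injB : ∀ s₁ ∈ B, ∀ s₂ ∈ B, f s₁ = f s₂ → s₁ = s₂ := by
      intro s₁ hs₁ s₂ hs₂ hfe
      rw [hf] at hfe
      simp only [hs₁, hs₂, dif_pos] at hfe
      exact congrArg Subtype.val (e.injective (Fin.val_injective hfe))
    set Q : Fin n → Fin a → Option ℕ :=
      fun i' j' => (P (i.succAbove i') (col j')).map f with hQ
    have hQnone : ∀ i' j', Q i' j' = none ↔ P (i.succAbove i') (col j') = none := by
      intro i' j'; rw [hQ]; simp
    have hQsome : ∀ i' j' v, Q i' j' = some v ↔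
        ∃ s, P (i.succAbove i') (col j') = some s ∧ f s = v := by
      intro i' j' v; rw [hQ]; simp [Option.map_eq_some_iff]
    have hQPDA : IsPDA a n t B.card Q := by
      refine ⟨?_, ?_, ?_, ?_⟩
      · intro j'
        have hfe : (Finset.univ.filter fun i' => Q i' j' = none)
            = Finset.univ.filter fun i' => P (i.succAbove i') (col j') = none := by
          apply Finset.filter_congr
          intro i' _
          simp [hQnone i' j']
        rw [hfe]
        rw [← h1 (col j')]
        apply Finset.card_bij (fun i' _ => i.succAbove i')
        · intro i' hi'
          rw [Finset.mem_filter] at hi' ⊢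
          exact ⟨Finset.mem_univ _, hi'.2⟩
        · intro x _ y _ hxy
          exact Fin.succAbove_right_injective hxy
        · intro x hx
          rw [Finset.mem_filter] at hx
          have hxi : x ≠ i := by
            intro hxi; subst hxi
            exact hAmem _ (hcolA j') hx.2
          obtain ⟨y, hy⟩ := Fin.exists_succAbove_eq hxi
          refine ⟨y, ?_, hy⟩
          rw [Finset.mem_filter]
          exact ⟨Finset.mem_univ _, by rw [hy]; exact hx.2⟩
      · intro i' j' v hv
        obtain ⟨s, hs, hfs⟩ := (hQsome i' j' v).mp hv
        have hsB := hmemB i' j' s hs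
        rw [hf] at hfs
        simp only [hsB, dif_pos] at hfs
        rw [← hfs]
        exact (e ⟨s, hsB⟩).isLt
      · intro v hv
        have hsB : (e.symm ⟨v, hv⟩ : ℕ) ∈ B := (e.symm ⟨v, hv⟩).2
        have hfv : f ((e.symm ⟨v, hv⟩ : ℕ)) = v := by
          rw [hf]
          simp only [(e.symm ⟨v, hv⟩).2, dif_pos]
          show (e (e.symm ⟨v, hv⟩) : ℕ) = v
          rw [e.apply_symm_apply]
        obtain ⟨s₀, hs₀B, hfs₀⟩ : ∃ s₀, s₀ ∈ B ∧ f s₀ = v := ⟨_, hsB, hfv⟩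
        rw [hB, Finset.mem_filter] at hs₀B
        obtain ⟨_, i', j', hPs⟩ := hs₀B
        exact ⟨i', j', (hQsome i' j' v).mpr ⟨s₀, hPs, hfs₀⟩⟩
      · intro i₁ j₁ i₂ j₂ v hq1 hq2 hne
        obtain ⟨s₁, hP1, hf1⟩ := (hQsome i₁ j₁ v).mp hq1
        obtain ⟨s₂, hP2, hf2⟩ := (hQsome i₂ j₂ v).mp hq2
        have hs12 : s₁ = s₂ :=
          hf_injB s₁ (hmemB _ _ _ hP1) s₂ (hmemB _ _ _ hP2) (hf1.trans hf2.symm)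
        subst hs12
        have hne' : i.succAbove i₁ ≠ i.succAbove i₂ ∨ col j₁ ≠ col j₂ := by
          rcases hne with h | h
          · exact Or.inl (fun hh => h (Fin.succAbove_right_injective hh))
          · exact Or.inr (fun hh => h (hcol_inj hh))
        obtain ⟨hr, hc, hz1, hz2⟩ := h4 _ _ _ _ _ hP1 hP2 hne'
        refine ⟨fun h => hr (congrArg _ h), fun h => hc (congrArg _ h), ?_, ?_⟩
        · rw [hQ]; simp [hz1]
        · rw [hQ]; simp [hz2]
    -- row i values
    set R : Finset ℕ := A.image (fun j => (P i j).getD 0) with hR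
    have hsomeA : ∀ j ∈ A, ∃ s, P i j = some s := by
      intro j hj
      have := hAmem j hj
      cases hPij : P i j with
      | none => exact absurd hPij this
      | some s => exact ⟨s, rfl⟩
    have hRcard : R.card = a := by
      rw [hR]
      apply Finset.card_image_of_injOn
      intro j₁ hj₁ j₂ hj₂ hgd
      by_contra hne
      obtain ⟨s₁, hs₁⟩ := hsomeA j₁ (Finset.mem_coe.mp hj₁)
      obtain ⟨s₂, hs₂⟩ := hsomeA j₂ (Finset.mem_coe.mp hj₂)
      simp only [hs₁, hs₂, Option.getD_some] at hgd
      subst hgd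
      exact (h4 i j₁ i j₂ s₁ hs₁ hs₂ (Or.inr hne)).1 rfl
    have hRS : R ⊆ Finset.range S := by
      intro s hs
      rw [hR, Finset.mem_image] at hs
      obtain ⟨j, hj, hjs⟩ := hs
      obtain ⟨s', hs'⟩ := hsomeA j hj
      rw [hs'] at hjs
      simp only [Option.getD_some] at hjs
      rw [Finset.mem_range, ← hjs]
      exact h2 _ _ _ hs'
    have hBS : B ⊆ Finset.range S := by
      rw [hB]; exact Finset.filter_subset _ _
    have hdisj : Disjoint R B := by
      rw [Finset.disjoint_left]
      intro s hsR hsB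
      rw [hR, Finset.mem_image] at hsR
      obtain ⟨j, hj, hjs⟩ := hsR
      obtain ⟨s', hs'⟩ := hsomeA j hj
      rw [hs'] at hjs
      simp only [Option.getD_some] at hjs
      subst hjs
      rw [hB, Finset.mem_filter] at hsB
      obtain ⟨_, i', j', hP'⟩ := hsB
      have hrne : i ≠ i.succAbove i' := (Fin.succAbove_ne i i').symm
      have := (h4 i j (i.succAbove i') (col j') s' hs' hP' (Or.inl hrne)).2.2.1
      exact hAmem _ (hcolA j') this
    have hsum : a + B.card ≤ S := by
      have hcup : (R ∪ B).card = a + B.card := by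
        rw [Finset.card_union_of_disjoint hdisj, hRcard]
      have hsub : R ∪ B ⊆ Finset.range S := Finset.union_subset hRS hBS
      calc a + B.card = (R ∪ B).card := hcup.symm
        _ ≤ (Finset.range S).card := Finset.card_le_card hsub
        _ = S := Finset.card_range S
    have hIH : m * Nat.choose n (t+1) ≤ B.card := IH a B.card Q hQPDA ha
    calc m * Nat.choose (n+1) (t+1)
        = m * Nat.choose n t + m * Nat.choose n (t+1) := by
          rw [Nat.choose_succ_succ, Nat.mul_add]
      _ ≤ a + B.card := Nat.add_le_add ha hIH
      _ ≤ S := hsum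

/-- S(m·C(k,t), k, t) = m·C(k,t+1). -/
theorem stmt14 (k t m : ℕ) (hk : 0 < k) (hm : 0 < m) (ht : t ≤ k) :
    minS (m * Nat.choose k t) k t = m * Nat.choose k (t + 1) := by
  have hmem : m * Nat.choose k (t + 1) ∈
      {S | ∃ P : Fin k → Fin (m * Nat.choose k t) → Option ℕ,
        IsPDA (m * Nat.choose k t) k t S P} := pda_exists k t m ht
  apply le_antisymm
  · exact Nat.sInf_le hmem
  · refine le_csInf ⟨_, hmem⟩ (fun S hS => ?_)
    obtain ⟨P, hP⟩ := hS
    exact pda_lower t m k _ S P hP le_rfl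
end

section
/- The 4×4 array with rows (0,3,5,*), (1,4,*,5), (2,*,4,3), (*,2,1,0) is a (4,4,1,6) PDA, and every (4,4,1,S) PDA satisfies S ≥ 6 (as 2·4−2·1−1 = 5 does not divide 3·4 = 12); hence S(4,4,1) = 6. -/
def M44 : Fin 4 → Fin 4 → Option ℕ :=
  ![![some 0, some 3, some 5, none],
    ![some 1, some 4, none, some 5],
    ![some 2, none, some 4, some 3],
    ![none, some 2, some 1, some 0]]

lemma M44_pda : IsPDA 4 4 1 6 M44 := by
  refine ⟨by decide, ?_, ?_, ?_⟩
  · intro i j s h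
    fin_cases i <;> fin_cases j <;> simp_all [M44] <;> omega
  · intro s hs
    interval_cases s <;> decide
  · intro i₁ j₁ i₂ j₂ s h1 h2 hne
    have key : ∀ a b c d : Fin 4, M44 a b = M44 c d → M44 a b ≠ none →
        (a ≠ c ∨ b ≠ d) → a ≠ c ∧ b ≠ d ∧ M44 a d = none ∧ M44 c b = none := by
          set_option synthInstance.maxSize 1024 in decide
    exact key i₁ j₁ i₂ j₂ (h1.trans h2.symm) (by simp [h1]) hne

lemma lower_bound : ∀ S : ℕ, ∀ P : Fin 4 → Fin 4 → Option ℕ, IsPDA 4 4 1 S P → 6 ≤ S := by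
  intro S P ⟨h1, h2, _, h4⟩
  set T : Finset (Fin 4 × Fin 4) := Finset.univ.filter (fun p => P p.1 p.2 ≠ none) with hT
  have hcol : ∀ j : Fin 4, ((Finset.univ.filter fun i => P i j ≠ none)).card = 3 := by
    intro j
    have h := Finset.card_filter_add_card_filter_not
      (s := (Finset.univ : Finset (Fin 4))) (p := fun i => P i j = none)
    rw [h1 j] at h
    simp only [Finset.card_univ, Fintype.card_fin] at h
    have : (Finset.filter (fun i => ¬P i j = none) Finset.univ).card
        = (Finset.filter (fun i => P i j ≠ none) Finset.univ).card := rfl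
    omega
  have hTcard : T.card = 12 := by
    have hsum : T.card = ∑ j : Fin 4, ((Finset.univ.filter fun i => P i j ≠ none)).card := by
      rw [Finset.card_eq_sum_card_fiberwise (f := Prod.snd) (t := Finset.univ)
        (fun _ _ => Finset.mem_univ _)]
      refine Finset.sum_congr rfl fun j _ => ?_
      apply Finset.card_bij (fun p _ => p.1)
      · intro p hp
        simp only [hT, Finset.mem_filter, Finset.mem_univ, true_and] at hp ⊢
        rw [← hp.2]; exact hp.1
      · intro p hp q hq hpq
        simp only [hT, Finset.mem_filter] at hp hq
        exact Prod.ext hpq (hp.2.trans hq.2.symm)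
      · intro i hi
        simp only [hT, Finset.mem_filter, Finset.mem_univ, true_and] at hi ⊢
        exact ⟨(i, j), ⟨hi, rfl⟩, rfl⟩
    rw [hsum]
    simp [hcol]
  set f : Fin 4 × Fin 4 → ℕ := fun p => (P p.1 p.2).getD 0 with hf
  have fiber : ∀ a ∈ T.image f, (T.filter fun p => f p = a).card ≤ 2 := by
    intro a _
    by_contra hc
    push_neg at hc
    obtain ⟨p, q, r, hp, hq, hr, hpq, hpr, hqr⟩ := Finset.two_lt_card_iff.mp hc
    simp only [hT, hf, Finset.mem_filter, Finset.mem_univ, true_and] at hp hq hr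
    obtain ⟨sp, hsp⟩ := Option.ne_none_iff_exists'.mp hp.1
    obtain ⟨sq, hsq⟩ := Option.ne_none_iff_exists'.mp hq.1
    obtain ⟨sr, hsr⟩ := Option.ne_none_iff_exists'.mp hr.1
    have e1 := hp.2; have e2 := hq.2; have e3 := hr.2
    rw [hsp] at e1; rw [hsq] at e2; rw [hsr] at e3
    simp only [Option.getD_some] at e1 e2 e3
    subst e1; subst e2; subst e3
    have hne1 : p.1 ≠ q.1 ∨ p.2 ≠ q.2 := by
      by_contra h; push_neg at h; exact hpq (Prod.ext h.1 h.2)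
    have hne2 : p.1 ≠ r.1 ∨ p.2 ≠ r.2 := by
      by_contra h; push_neg at h; exact hpr (Prod.ext h.1 h.2)
    have hne3 : q.1 ≠ r.1 ∨ q.2 ≠ r.2 := by
      by_contra h; push_neg at h; exact hqr (Prod.ext h.1 h.2)
    obtain ⟨_, _, _, hq1⟩ := h4 p.1 p.2 q.1 q.2 _ hsp hsq hne1
    obtain ⟨_, _, _, hr1⟩ := h4 p.1 p.2 r.1 r.2 _ hsp hsr hne2
    obtain ⟨hqr1, _, _, _⟩ := h4 q.1 q.2 r.1 r.2 _ hsq hsr hne3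
    have htwo : 1 < ((Finset.univ.filter fun i => P i p.2 = none)).card := by
      apply Finset.one_lt_card.mpr
      exact ⟨q.1, by simp [hq1], r.1, by simp [hr1], hqr1⟩
    rw [h1 p.2] at htwo; omega
  have himage : T.image f ⊆ Finset.range S := by
    intro a ha
    obtain ⟨p, hp, rfl⟩ := Finset.mem_image.mp ha
    simp only [hT, Finset.mem_filter, Finset.mem_univ, true_and] at hp
    obtain ⟨sp, hsp⟩ := Option.ne_none_iff_exists'.mp hp
    rw [Finset.mem_range, hf]
    simp only [hsp, Option.getD_some]
    exact h2 p.1 p.2 sp hsp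
  have k1 := Finset.card_le_mul_card_image T 2 fiber
  have k2 := Finset.card_le_card himage
  simp only [Finset.card_range] at k2
  omega

/-- the explicit 4×4 array with rows (0,3,5,*), (1,4,*,5),
(2,*,4,3), (*,2,1,0) is a (4,4,1,6) PDA, every (4,4,1,S) PDA has S ≥ 6, and
hence S(4,4,1) = 6. -/
theorem stmt19 :
    IsPDA 4 4 1 6
      ![![some 0, some 3, some 5, none],
        ![some 1, some 4, none, some 5],
        ![some 2, none, some 4, some 3],
        ![none, some 2, some 1, some 0]] ∧
    (∀ S : ℕ, ∀ P : Fin 4 → Fin 4 → Option ℕ, IsPDA 4 4 1 S P → 6 ≤ S) ∧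
    minS 4 4 1 = 6 := by
  refine ⟨M44_pda, lower_bound, ?_⟩
  apply le_antisymm
  · exact Nat.sInf_le ⟨M44, M44_pda⟩
  · exact le_csInf ⟨6, M44, M44_pda⟩ (fun S ⟨P, hP⟩ => lower_bound S P hP)
end
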